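/- If A is an N×N real matrix of rank at most n with max_{i,j} |A_{i,j} - δ_{i,j}| ≤ 1/3, then N ≤ 6^n. -/

import Mathlib

/-
Dividing each row of `A` by its diagonal entry gives a matrix `B` of rank at most `n` with unit
diagonal and off-diagonal entries of modulus at most `1/2`. Its entrywise `(n+1)`-st power `C`
has off-diagonal entries at most `2^-(n+1)`, and its columns are combinations of the
degree-`(n+1)` monomials in `n` coordinates, so `rank C ≤ C(2n, n+1) ≤ 4^n`. Alon's inequality
`(tr C)^2 ≤ rank C * ∑ C_ij^2` then yields `N ≤ 4^n + (N-1)/4`, i.e. `3N + 1 ≤ 4^(n+1) ≤ 3 * 6^n + 1`.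
-/

open Module Finset Matrix Submodule
open scoped RealInnerProductSpace

theorem LinearMap.sq_trace_le_finrank_range_mul_sum_norm_sq {ι E : Type*} [Fintype ι]
    [NormedAddCommGroup E] [InnerProductSpace ℝ E] [FiniteDimensional ℝ E]
    (f : E →ₗ[ℝ] E) (e : OrthonormalBasis ι ℝ E) :
    trace ℝ E f ^ 2 ≤ finrank ℝ (range f) * ∑ i, ‖f (e i)‖ ^ 2 := by
  let b := stdOrthonormalBasis ℝ (range f)
  have hexpand (i : ι) : ⟪e i, f (e i)⟫ = ∑ s, ⟪e i, b s⟫ * ⟪(b s : E), f (e i)⟫ := by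
    have := congrArg (fun y : range f => ⟪e i, (y : E)⟫)
      (b.sum_repr' ⟨f (e i), mem_range_self f _⟩)
    simp only [Submodule.coe_sum, Submodule.coe_smul, inner_sum, inner_smul_right,
      Submodule.coe_inner] at this
    simpa only [mul_comm] using this.symm
  have hnorm_b : ∑ s, ∑ i, ⟪e i, (b s : E)⟫ ^ 2 = finrank ℝ (range f) := by
    simp [e.sum_sq_inner_right, Submodule.norm_coe, b.orthonormal.1 _]
  have hnorm_f (i : ι) : ∑ s, ⟪(b s : E), f (e i)⟫ ^ 2 = ‖f (e i)‖ ^ 2 := by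
    simpa [Submodule.coe_inner] using b.sum_sq_inner_right ⟨f (e i), mem_range_self f _⟩
  calc trace ℝ E f ^ 2 = (∑ p : ι × _, ⟪e p.1, b p.2⟫ * ⟪(b p.2 : E), f (e p.1)⟫) ^ 2 := by
        rw [trace_eq_sum_inner f e, Fintype.sum_prod_type]
        simp only [hexpand]
    _ ≤ (∑ p : ι × _, ⟪e p.1, b p.2⟫ ^ 2) * ∑ p : ι × _, ⟪(b p.2 : E), f (e p.1)⟫ ^ 2 :=
        sum_mul_sq_le_sq_mul_sq _ _ _
    _ = finrank ℝ (range f) * ∑ i, ‖f (e i)‖ ^ 2 := by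
        rw [Fintype.sum_prod_type, Fintype.sum_prod_type, sum_comm, hnorm_b]
        simp only [hnorm_f]

theorem Matrix.sq_trace_le_rank_mul_sum_sq {n : Type*} [Fintype n] [DecidableEq n]
    (M : Matrix n n ℝ) : M.trace ^ 2 ≤ M.rank * ∑ i, ∑ j, M i j ^ 2 := by
  let e := EuclideanSpace.basisFun n ℝ
  have h := (toEuclideanLin M).sq_trace_le_finrank_range_mul_sum_norm_sq e
  rw [toEuclideanLin_eq_toLin_orthonormal, LinearMap.trace_eq_matrix_trace ℝ e.toBasis,
    LinearMap.toMatrix_toLin, ← rank_eq_finrank_range_toLin] at h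
  refine h.trans_eq ?_
  rw [sum_comm]
  congr 1
  refine sum_congr rfl fun j _ => ?_
  rw [← e.coe_toBasis, toLin_self, EuclideanSpace.real_norm_sq_eq]
  simp [Pi.single_apply]

theorem Matrix.card_le_rank_mul_of_diag_eq_one {ι : Type*} [Fintype ι] [DecidableEq ι]
    (M : Matrix ι ι ℝ) {ε : ℝ} (hdiag : ∀ i, M i i = 1) (hoff : ∀ i j, i ≠ j → M i j ^ 2 ≤ ε) :
    (Fintype.card ι : ℝ) ≤ M.rank * (1 + (Fintype.card ι - 1) * ε) := by
  set N := Fintype.card ι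
  rcases Nat.eq_zero_or_pos N with hN | hN
  · have hrank : M.rank = 0 := Nat.le_zero.mp (hN ▸ M.rank_le_card_width)
    simp [hN, hrank]
  have htrace : M.trace = N := by simp [Matrix.trace, hdiag, N]
  have hrow (i : ι) : ∑ j, M i j ^ 2 ≤ 1 + (N - 1) * ε := by
    rw [← add_sum_erase _ _ (mem_univ i), hdiag, one_pow]
    gcongr
    calc ∑ j ∈ univ.erase i, M i j ^ 2 ≤ ∑ _j ∈ univ.erase i, ε :=
          sum_le_sum fun j hj => hoff i j (ne_of_mem_erase hj).symm
      _ = (N - 1) * ε := by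
          rw [sum_const, card_erase_of_mem (mem_univ i), nsmul_eq_mul, card_univ,
            Nat.cast_pred hN]
  have hsq : (N : ℝ) ^ 2 ≤ M.rank * (N * (1 + (N - 1) * ε)) := by
    calc (N : ℝ) ^ 2 = M.trace ^ 2 := by rw [htrace]
      _ ≤ M.rank * ∑ i, ∑ j, M i j ^ 2 := M.sq_trace_le_rank_mul_sum_sq
      _ ≤ M.rank * ∑ _i : ι, (1 + (N - 1) * ε) := by
          gcongr with i
          exact hrow i
      _ = M.rank * (N * (1 + (N - 1) * ε)) := by rw [sum_const, card_univ, nsmul_eq_mul]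
  have hNpos : (0 : ℝ) < N := by exact_mod_cast hN
  nlinarith

theorem Matrix.exists_eq_mul_of_rank {m n K : Type*} [Fintype n] [Field K] (A : Matrix m n K) :
    ∃ (U : Matrix m (Fin A.rank) K) (V : Matrix (Fin A.rank) n K), A = U * V := by
  let W := span K (Set.range A.col)
  have : FiniteDimensional K W := FiniteDimensional.span_of_finite K (Set.finite_range _)
  let b : Basis (Fin A.rank) K W := finBasisOfFinrankEq K W A.rank_eq_finrank_span_cols.symm
  have hcol (j : n) : A.col j ∈ W := subset_span ⟨j, rfl⟩
  refine ⟨of fun i s => (b s : m → K) i, of fun s j => b.repr ⟨A.col j, hcol j⟩ s, ?_⟩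
  ext i j
  have := congrArg (fun w : W => (w : m → K) i) (b.sum_repr ⟨A.col j, hcol j⟩)
  simp only [Submodule.coe_sum, Submodule.coe_smul, Finset.sum_apply, Pi.smul_apply,
    smul_eq_mul] at this
  rw [mul_apply, ← col_apply A j i, ← this]
  simp only [of_apply, mul_comm]

theorem Matrix.rank_map_pow_le {m n K : Type*} [Fintype n] [Field K] (A : Matrix m n K) (k : ℕ) :
    (A.map (· ^ k)).rank ≤ A.rank.multichoose k := by
  obtain ⟨U, V, hUV⟩ := A.exists_eq_mul_of_rank
  let U' : Matrix m (Sym (Fin A.rank) k) K :=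
    of fun i S => S.val.countPerms * (S.val.map (U i)).prod
  let V' : Matrix (Sym (Fin A.rank) k) n K := of fun S j => (S.val.map (fun s => V s j)).prod
  have hpow : A.map (· ^ k) = U' * V' := by
    ext i j
    simp only [hUV, map_apply, mul_apply, Finset.sum_pow, sym_univ, U', V', of_apply,
      Multiset.prod_map_mul, mul_assoc]
  calc (A.map (· ^ k)).rank ≤ U'.rank := hpow ▸ rank_mul_le_left U' V'
    _ ≤ Fintype.card (Sym (Fin A.rank) k) := U'.rank_le_card_width
    _ = A.rank.multichoose k := by simp [Sym.card_sym_eq_multichoose]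

theorem Nat.multichoose_succ_le_four_pow {r n : ℕ} (h : r ≤ n) :
    r.multichoose (n + 1) ≤ 4 ^ n := by
  rw [Nat.multichoose_eq, show 4 ^ n = 2 ^ (2 * n) by rw [pow_mul]; norm_num]
  exact (Nat.choose_le_two_pow _ _).trans (Nat.pow_le_pow_right two_pos (by omega))

theorem Nat.four_pow_succ_le_three_mul_six_pow_add_one (n : ℕ) : 4 ^ (n + 1) ≤ 3 * 6 ^ n + 1 := by
  induction n with
  | zero => norm_num
  | succ n ih =>
    have : 1 ≤ 6 ^ n := Nat.one_le_pow _ _ (by norm_num)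
    rw [pow_succ, pow_succ]
    omega

theorem Matrix.three_mul_card_add_one_le_four_pow {ι : Type*} [Fintype ι] [DecidableEq ι]
    (B : Matrix ι ι ℝ) {n : ℕ} (hrank : B.rank ≤ n) (hdiag : ∀ i, B i i = 1)
    (hoff : ∀ i j, i ≠ j → |B i j| ≤ 1 / 2) :
    3 * Fintype.card ι + 1 ≤ 4 ^ (n + 1) := by
  set N := Fintype.card ι
  set C := B.map (· ^ (n + 1))
  have hrankC : (C.rank : ℝ) ≤ 4 ^ n := by
    exact_mod_cast (B.rank_map_pow_le (n + 1)).trans (Nat.multichoose_succ_le_four_pow hrank)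
  have hdiagC (i : ι) : C i i = 1 := by simp [C, hdiag]
  have hoffC (i j : ι) (hij : i ≠ j) : C i j ^ 2 ≤ (1 / 4) ^ (n + 1) := by
    have hsq : B i j ^ 2 ≤ 1 / 4 := by
      have := abs_le.mp (hoff i j hij)
      nlinarith
    calc C i j ^ 2 = (B i j ^ 2) ^ (n + 1) := by simp only [C, map_apply]; ring
      _ ≤ (1 / 4) ^ (n + 1) := pow_le_pow_left₀ (sq_nonneg _) hsq _
  have halon := C.card_le_rank_mul_of_diag_eq_one hdiagC hoffC
  have hε : (4 : ℝ) ^ n * (1 / 4) ^ (n + 1) = 1 / 4 := by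
    rw [pow_succ, ← mul_assoc, ← mul_pow]; norm_num
  have hfactor : 0 ≤ 1 + ((N : ℝ) - 1) * (1 / 4) ^ (n + 1) := by
    have hle : (1 / 4 : ℝ) ^ (n + 1) ≤ 1 := pow_le_one₀ (by norm_num) (by norm_num)
    have hNε : 0 ≤ (N : ℝ) * (1 / 4) ^ (n + 1) := by positivity
    linarith
  have : (N : ℝ) ≤ 4 ^ n + ((N : ℝ) - 1) / 4 := by
    calc (N : ℝ) ≤ C.rank * (1 + ((N : ℝ) - 1) * (1 / 4) ^ (n + 1)) := halon
      _ ≤ 4 ^ n * (1 + ((N : ℝ) - 1) * (1 / 4) ^ (n + 1)) := by gcongr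
      _ = 4 ^ n + ((N : ℝ) - 1) / 4 := by linear_combination ((N : ℝ) - 1) * hε
  have : (3 * N + 1 : ℝ) ≤ 4 ^ (n + 1) := by rw [pow_succ]; linarith
  exact_mod_cast this

theorem stmt_1 (N n : ℕ) (A : Matrix (Fin N) (Fin N) ℝ)
    (hrank : A.rank ≤ n)
    (hA : ∀ i j, |A i j - (if i = j then 1 else 0)| ≤ 1/3) :
    N ≤ 6 ^ n := by
  have hdiagA (i : Fin N) : 2 / 3 ≤ A i i := by
    have := abs_le.mp (hA i i)
    simp only [if_true] at this
    linarith
  have hoffA (i j : Fin N) (hij : i ≠ j) : |A i j| ≤ 1 / 3 := by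
    simpa [hij] using hA i j
  let B := diagonal (fun i => (A i i)⁻¹) * A
  have hB (i j : Fin N) : B i j = A i j / A i i := by simp [B, div_eq_inv_mul]
  have key := B.three_mul_card_add_one_le_four_pow ((rank_mul_le_right _ _).trans hrank)
    (fun i => by rw [hB, div_self (by linarith [hdiagA i])])
    (fun i j hij => by
      have hpos : 0 < A i i := by linarith [hdiagA i]
      rw [hB, abs_div, abs_of_pos hpos, div_le_iff₀ hpos]
      linarith [hoffA i j hij, hdiagA i])
  have := Nat.four_pow_succ_le_three_mul_six_pow_add_one n
  simp only [Fintype.card_fin] at key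
  omega
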